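/- Let G'=(V',E') be a directed graph without self-loops in which every node has in-degree 2 and out-degree 2, and such that for every ordered pair of distinct nodes u,v there exist two edge-disjoint directed paths from u to v. Let e ∈ E' and let F be a frame for e. Define y^{(e)} ∈ ℝ^{E'} by y^{(e)}_e = 0, y^{(e)}_{e'} = 1 for e' ∈ F, and y^{(e)}_{e'} = 1/2 for all remaining edges e'. Then y^{(e)} ∈ AT_bal(G'). -/

import Mathlib

/-! Write `y` for `y^{(e)}`, so `2 y = 1 + 1_F - 1_e`. If `e` leaves `S`, the `u`–`v` path of the
frame leaves `S` along an edge of `F`, of weight `1`; otherwise two edge-disjoint paths from `S`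
to its complement leave `S` along two distinct edges other than `e`, each of weight at least
`1/2`. In-cuts are out-cuts of the complement. Since in- and out-degrees agree, balance at a node
reduces to the balance of `F` together with the reversed edge `(v, u)`, which holds because the
frame's cycles are balanced and `(v, u)` closes up its path. -/

open Finset

namespace TSPGap


/-! ### Lovász–Schrijver lift-and-project operators -/

/-- `cone(R) = {(λ, λx) : λ ≥ 0, x ∈ R}`, with the extra 0th coordinate first. -/
def lsCone {ι : Type*} (R : Set (ι → ℝ)) : Set (ℝ × (ι → ℝ)) :=
  {p | ∃ c : ℝ, ∃ y ∈ R, 0 ≤ c ∧ p.1 = c ∧ p.2 = fun i => c * y i}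

/-- `X` is a protection matrix witnessing `x ∈ N(R)`: it is symmetric, its 0th row and
diagonal both equal `(1, x)`, and each row `X_i` and difference `X_0 - X_i` lies in `cone(R)`. -/
def IsProtection {ι : Type*} (R : Set (ι → ℝ)) (x : ι → ℝ)
    (X : Option ι → Option ι → ℝ) : Prop :=
  (∀ i j, X i j = X j i) ∧
  X none none = 1 ∧
  (∀ i, X none (some i) = x i) ∧
  (∀ i, X (some i) (some i) = x i) ∧
  (∀ i, (X (some i) none, fun j => X (some i) (some j)) ∈ lsCone R) ∧
  (∀ i, (X none none - X (some i) none,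
         fun j => X none (some j) - X (some i) (some j)) ∈ lsCone R)

/-- The Lovász–Schrijver `N` operator. -/
def lsN {ι : Type*} (R : Set (ι → ℝ)) : Set (ι → ℝ) :=
  {x | ∃ X : Option ι → Option ι → ℝ, IsProtection R x X}

/-- The Lovász–Schrijver `N₊` operator (protection matrix additionally PSD). -/
def lsNplus {ι : Type*} [Fintype ι] (R : Set (ι → ℝ)) : Set (ι → ℝ) :=
  {x | ∃ X : Matrix (Option ι) (Option ι) ℝ, X.PosSemidef ∧
        IsProtection R x (fun i j => X i j)}

/-! ### Directed graphs -/

variable {V : Type*} [DecidableEq V]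

/-- The list of (directed) steps of a walk given by its list of vertices. -/
def dSteps (l : List V) : List (V × V) := l.zip l.tail

/-- The steps of a closed walk given by its list of vertices. -/
def cycSteps (l : List V) : List (V × V) := l.zip (l.rotate 1)

/-- `l` is a directed walk from `u` to `v` using edges of `E`. -/
def IsDWalk (E : Finset (V × V)) (u v : V) (l : List V) : Prop :=
  l.head? = some u ∧ l.getLast? = some v ∧ ∀ a ∈ dSteps l, a ∈ E

/-- Total weight of a walk. -/
def dWalkWeight (w : V × V → ℝ) (l : List V) : ℝ := ((dSteps l).map w).sum

/-- Shortest-path distance from `u` to `v` in the weighted directed graph `(E, w)`. -/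
noncomputable def dDist (E : Finset (V × V)) (w : V × V → ℝ) (u v : V) : ℝ :=
  sInf {c | ∃ l : List V, IsDWalk E u v l ∧ dWalkWeight w l = c}

/-- `x(δ⁺(S))`. -/
def outCut (E : Finset (V × V)) (x : ↥E → ℝ) (S : Finset V) : ℝ :=
  ∑ e ∈ E.attach.filter (fun e => e.val.1 ∈ S ∧ e.val.2 ∉ S), x e

/-- `x(δ⁻(S))`. -/
def inCut (E : Finset (V × V)) (x : ↥E → ℝ) (S : Finset V) : ℝ :=
  ∑ e ∈ E.attach.filter (fun e => e.val.1 ∉ S ∧ e.val.2 ∈ S), x e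

/-- `d · x = ∑_e d_e x_e` over the edge set `E`. -/
def dDot (E : Finset (V × V)) (d : V × V → ℝ) (x : ↥E → ℝ) : ℝ :=
  ∑ e ∈ E.attach, d e.val * x e

/-- The balanced asymmetric tour polytope of the directed graph with node set `VS`
and edge set `E`. -/
def ATbal (VS : Finset V) (E : Finset (V × V)) : Set (↥E → ℝ) :=
  {x | (∀ e, 0 ≤ x e ∧ x e ≤ 1) ∧
       (∀ S : Finset V, S ⊆ VS → S.Nonempty → S ≠ VS →
          1 ≤ outCut E x S ∧ 1 ≤ inCut E x S) ∧
       (∀ v ∈ VS, outCut E x {v} = inCut E x {v})}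

/-- Indicator vectors of Hamiltonian cycles (on node set `VS`) among edges `E`. -/
def hamCycleVecs (VS : Finset V) (E : Finset (V × V)) : Set (↥E → ℝ) :=
  {x | ∃ c : List V, 2 ≤ c.length ∧ c.Nodup ∧ c.toFinset = VS ∧
        (∀ a ∈ cycSteps c, a ∈ E) ∧
        ∀ e : ↥E, x e = if e.val ∈ cycSteps c then 1 else 0}

/-- Edge set of the complete directed graph on the node set `VS` (no self-loops). -/
def dComplete (VS : Finset V) : Finset (V × V) := (VS ×ˢ VS).filter (fun e => e.1 ≠ e.2)

/-- Edge set of the complete directed graph on all of `V` (no self-loops). -/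
def dCompleteAll (V : Type*) [Fintype V] [DecidableEq V] : Finset (V × V) :=
  Finset.univ.filter (fun e => e.1 ≠ e.2)

/-- Out-degree of `v` in edge set `E`. -/
def outDeg (E : Finset (V × V)) (v : V) : ℕ := (E.filter (fun e => e.1 = v)).card

/-- In-degree of `v` in edge set `E`. -/
def inDeg (E : Finset (V × V)) (v : V) : ℕ := (E.filter (fun e => e.2 = v)).card

/-- A frame for the edge `e = (u,v)`: a set `F ⊆ E \ {e}` consisting of an edge-simple
path from `u` to `v` together with zero or more edge-simple cycles, all pairwise
edge-disjoint. -/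
def IsFrame (E : Finset (V × V)) (e : V × V) (F : Finset (V × V)) : Prop :=
  F ⊆ E.erase e ∧
  ∃ (p : List V) (cs : List (List V)),
    p.head? = some e.1 ∧ p.getLast? = some e.2 ∧ (∀ a ∈ dSteps p, a ∈ E) ∧
    (∀ c ∈ cs, c ≠ [] ∧ ∀ a ∈ cycSteps c, a ∈ E) ∧
    (dSteps p ++ (cs.map cycSteps).flatten).Nodup ∧
    F = (dSteps p ++ (cs.map cycSteps).flatten).toFinset

/-- There exist two edge-disjoint directed (simple) paths from `u` to `v` in `E`. -/
def TwoEdgeDisjointPaths (E : Finset (V × V)) (u v : V) : Prop :=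
  ∃ p q : List V, p.Nodup ∧ q.Nodup ∧
    p.head? = some u ∧ p.getLast? = some v ∧
    q.head? = some u ∧ q.getLast? = some v ∧
    (∀ a ∈ dSteps p, a ∈ E) ∧ (∀ a ∈ dSteps q, a ∈ E) ∧
    (dSteps p).Disjoint (dSteps q)




/-! ### The Charikar–Goemans–Karloff graphs -/

/-- Vertex type housing the graph `G_{k,r}` (index `k = 0` is a dummy level). -/
def CGKV : ℕ → Type
  | 0 => PUnit
  | 1 => ℕ
  | k + 2 => (ℕ × CGKV (k + 1)) ⊕ Fin 2

instance CGKV.decEq : (k : ℕ) → DecidableEq (CGKV k)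
  | 0 => inferInstanceAs (DecidableEq PUnit)
  | 1 => inferInstanceAs (DecidableEq ℕ)
  | k + 2 =>
      letI : DecidableEq (CGKV (k + 1)) := CGKV.decEq (k + 1)
      inferInstanceAs (DecidableEq ((ℕ × CGKV (k + 1)) ⊕ Fin 2))

/-- The source of `G_{k,r}`. -/
def CGKsrc (r : ℕ) : (k : ℕ) → CGKV k
  | 0 => PUnit.unit
  | 1 => (0 : ℕ)
  | _ + 2 => Sum.inr 0

/-- The sink of `G_{k,r}`. -/
def CGKsnk (r : ℕ) : (k : ℕ) → CGKV k
  | 0 => PUnit.unit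
  | 1 => (r + 1 : ℕ)
  | _ + 2 => Sum.inr 1

/-- The node set of `G_{k,r}`. -/
def CGKVS (r : ℕ) : (k : ℕ) → Finset (CGKV k)
  | 0 => ∅
  | 1 => Finset.range (r + 2)
  | k + 2 =>
      ((Finset.range r) ×ˢ CGKVS r (k + 1)).image Sum.inl ∪ {Sum.inr 0, Sum.inr 1}

/-- The edge set of `G_{k,r}`: at level 1, two oppositely-directed paths of `r+1` edges
on the nodes `0, …, r+1`; at level `k+2`, the edges of the `r` copies of `G_{k+1,r}`
together with a path from the source `s` through the copies' sources to the sink `t`,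
and a path from `t` through the copies' sinks (in the opposite order) back to `s`. -/
def CGKE (r : ℕ) : (k : ℕ) → Finset (CGKV k × CGKV k)
  | 0 => ∅
  | 1 => (dSteps (List.range (r + 2))).toFinset ∪
         (dSteps (List.range (r + 2)).reverse).toFinset
  | k + 2 =>
      (Finset.range r).biUnion
        (fun j => (CGKE r (k + 1)).image (fun e => (Sum.inl (j, e.1), Sum.inl (j, e.2)))) ∪
      (dSteps (Sum.inr 0 ::
        ((List.range r).map (fun j => Sum.inl (j, CGKsrc r (k + 1)))) ++ [Sum.inr 1])).toFinset ∪
      (dSteps (Sum.inr 1 ::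
        (((List.range r).map (fun j => Sum.inl (j, CGKsnk r (k + 1)))).reverse) ++ [Sum.inr 0])).toFinset

/-- Edge weights of `G_{k,r}` (and of `L_{k,r}`): level-`ℓ` edges have weight `r^(ℓ-1)`. -/
def CGKw (r : ℕ) : (k : ℕ) → CGKV k × CGKV k → ℝ
  | 0, _ => 0
  | 1, _ => 1
  | k + 2, e =>
      match e with
      | (Sum.inl (j, u), Sum.inl (j', v)) =>
          if j = j' then CGKw r (k + 1) (u, v) else (r : ℝ) ^ (k + 1)
      | _ => (r : ℝ) ^ (k + 1)

/-- `v₁`: the successor of `s` on the forward path of `G_{k,r}`. -/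
def Lv1 (r : ℕ) : (k : ℕ) → CGKV k
  | 0 => PUnit.unit
  | 1 => (1 : ℕ)
  | k + 2 => Sum.inl (0, CGKsrc r (k + 1))

/-- `v₂`: the predecessor of `t` on the forward path of `G_{k,r}`. -/
def Lv2 (r : ℕ) : (k : ℕ) → CGKV k
  | 0 => PUnit.unit
  | 1 => (r : ℕ)
  | k + 2 => Sum.inl (r - 1, CGKsrc r (k + 1))

/-- `v₃`: the successor of `t` on the backward path of `G_{k,r}`. -/
def Lv3 (r : ℕ) : (k : ℕ) → CGKV k
  | 0 => PUnit.unit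
  | 1 => (r : ℕ)
  | k + 2 => Sum.inl (r - 1, CGKsnk r (k + 1))

/-- `v₄`: the predecessor of `s` on the backward path of `G_{k,r}`. -/
def Lv4 (r : ℕ) : (k : ℕ) → CGKV k
  | 0 => PUnit.unit
  | 1 => (1 : ℕ)
  | k + 2 => Sum.inl (0, CGKsnk r (k + 1))

/-- The node set `V_{k,r}` of `L_{k,r}`: the nodes of `G_{k,r}` minus the two terminals. -/
def LVS (r k : ℕ) : Finset (CGKV k) :=
  ((CGKVS r k).erase (CGKsrc r k)).erase (CGKsnk r k)

/-- The edge set `E_{k,r}` of `L_{k,r}`: the edges of `G_{k,r}` not incident to a terminal,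
plus the two new edges `(v₂,v₁)` and `(v₄,v₃)`. -/
def LE (r k : ℕ) : Finset (CGKV k × CGKV k) :=
  (CGKE r k).filter (fun e =>
    e.1 ≠ CGKsrc r k ∧ e.1 ≠ CGKsnk r k ∧ e.2 ≠ CGKsrc r k ∧ e.2 ≠ CGKsnk r k) ∪
  {(Lv2 r k, Lv1 r k), (Lv4 r k, Lv3 r k)}



/-! ### Undirected graphs -/

variable {V : Type*} [DecidableEq V]

/-- The (undirected) steps of a walk given by its list of vertices. -/
def uSteps (l : List V) : List (Sym2 V) := (l.zip l.tail).map (fun p => s(p.1, p.2))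

/-- `l` is a walk from `u` to `v` in the undirected edge set `E`. -/
def IsUWalk (E : Finset (Sym2 V)) (u v : V) (l : List V) : Prop :=
  l.head? = some u ∧ l.getLast? = some v ∧ ∀ e ∈ uSteps l, e ∈ E

/-- Whether the undirected edge `e` crosses the cut `(S, S̄)`. -/
def uCrosses (S : Finset V) (e : Sym2 V) : Bool :=
  Sym2.lift ⟨fun a b => xor (decide (a ∈ S)) (decide (b ∈ S)),
    fun a b => Bool.xor_comm _ _⟩ e

/-- `x(δ(S))`. -/
def uCut (E : Finset (Sym2 V)) (x : ↥E → ℝ) (S : Finset V) : ℝ :=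
  ∑ e ∈ E.attach.filter (fun e => uCrosses S e.val), x e

/-- `d · x = ∑_e d_e x_e` over the undirected edge set `E`. -/
def uDot (E : Finset (Sym2 V)) (d : Sym2 V → ℝ) (x : ↥E → ℝ) : ℝ :=
  ∑ e ∈ E.attach, d e.val * x e

/-- The symmetric tour polytope of the undirected graph with node set `VS`, edges `E`. -/
def STpoly (VS : Finset V) (E : Finset (Sym2 V)) : Set (↥E → ℝ) :=
  {x | (∀ e, 0 ≤ x e ∧ x e ≤ 1) ∧
       (∀ S : Finset V, S ⊆ VS → S.Nonempty → S ≠ VS → 2 ≤ uCut E x S) ∧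
       (∀ v ∈ VS, uCut E x {v} = 2)}

/-- The symmetric path polytope of the undirected graph with node set `VS`, edges `E`,
and endpoints `s`, `t`. -/
def SPpoly (VS : Finset V) (E : Finset (Sym2 V)) (s t : V) : Set (↥E → ℝ) :=
  {x | (∀ e, 0 ≤ x e ∧ x e ≤ 1) ∧
       (∀ S : Finset V, S ⊆ VS → S.Nonempty → S ≠ VS →
          (((s ∈ S) ↔ (t ∈ S)) → 2 ≤ uCut E x S) ∧
          (¬((s ∈ S) ↔ (t ∈ S)) → 1 ≤ uCut E x S)) ∧
       (∀ v ∈ VS, v ≠ s → v ≠ t → uCut E x {v} = 2) ∧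
       uCut E x {s} = 1 ∧ uCut E x {t} = 1}

/-- Indicator vectors of Hamiltonian paths from `s` to `t` (on node set `VS`) among
edges `E`. -/
def uHamPathVecs (VS : Finset V) (E : Finset (Sym2 V)) (s t : V) : Set (↥E → ℝ) :=
  {x | ∃ p : List V, p.Nodup ∧ p.toFinset = VS ∧
        p.head? = some s ∧ p.getLast? = some t ∧
        (∀ e ∈ uSteps p, e ∈ E) ∧
        ∀ e : ↥E, x e = if e.val ∈ uSteps p then 1 else 0}

/-- Edge set of the complete undirected graph on all of `V` (no self-loops). -/
def uCompleteAll (V : Type*) [Fintype V] [DecidableEq V] : Finset (Sym2 V) :=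
  Finset.univ.filter (fun e => ¬ e.IsDiag)

/-- Shortest-path distance (number of edges) between the endpoints of `e`, in the
unweighted undirected graph with edge set `E`. -/
noncomputable def uDist (E : Finset (Sym2 V)) (e : Sym2 V) : ℝ :=
  sInf {c | ∃ u v : V, e = s(u, v) ∧
    ∃ l : List V, IsUWalk E u v l ∧ ((uSteps l).length : ℝ) = c}

/-! ### Cheung's graphs -/

/-- The node set `V_{ℓ,q}` of Cheung's graph `G_{ℓ,q}`: a top path and a bottom path of
`ℓ+1` nodes each, a left and a right clique of `3q+3` nodes each, and nodes `s`, `t`. -/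
inductive ChV (l q : ℕ) where
  | top : Fin (l + 1) → ChV l q
  | bot : Fin (l + 1) → ChV l q
  | left : Fin (3 * q + 3) → ChV l q
  | right : Fin (3 * q + 3) → ChV l q
  | vs : ChV l q
  | vt : ChV l q
deriving DecidableEq, Fintype

/-- The edges of the two paths of `G_{ℓ,q}`. -/
def ChEpaths (l q : ℕ) : Finset (Sym2 (ChV l q)) :=
  (Finset.univ : Finset (Fin l)).image
    (fun i => s(ChV.top i.castSucc, ChV.top i.succ)) ∪
  (Finset.univ : Finset (Fin l)).image
    (fun i => s(ChV.bot i.castSucc, ChV.bot i.succ))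

/-- The edges within the two cliques of `G_{ℓ,q}`. -/
def ChEcliques (l q : ℕ) : Finset (Sym2 (ChV l q)) :=
  ((Finset.univ : Finset (Fin (3 * q + 3) × Fin (3 * q + 3))).filter
      (fun p => p.1 ≠ p.2)).image (fun p => s(ChV.left p.1, ChV.left p.2)) ∪
  ((Finset.univ : Finset (Fin (3 * q + 3) × Fin (3 * q + 3))).filter
      (fun p => p.1 ≠ p.2)).image (fun p => s(ChV.right p.1, ChV.right p.2))

/-- The connection edges of `G_{ℓ,q}`: path endpoints to the cliques, `s` to the left
clique, and `t` to the right clique. -/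
def ChEconn (l q : ℕ) : Finset (Sym2 (ChV l q)) :=
  (Finset.univ : Finset (Fin (3 * q + 3))).image (fun i => s(ChV.top 0, ChV.left i)) ∪
  (Finset.univ : Finset (Fin (3 * q + 3))).image (fun i => s(ChV.bot 0, ChV.left i)) ∪
  (Finset.univ : Finset (Fin (3 * q + 3))).image
    (fun i => s(ChV.top (Fin.last l), ChV.right i)) ∪
  (Finset.univ : Finset (Fin (3 * q + 3))).image
    (fun i => s(ChV.bot (Fin.last l), ChV.right i)) ∪
  (Finset.univ : Finset (Fin (3 * q + 3))).image (fun i => s(ChV.vs, ChV.left i)) ∪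
  (Finset.univ : Finset (Fin (3 * q + 3))).image (fun i => s(ChV.vt, ChV.right i))

/-- The edge set `E_{ℓ,q}` of Cheung's graph `G_{ℓ,q}`. -/
def ChE (l q : ℕ) : Finset (Sym2 (ChV l q)) :=
  ChEpaths l q ∪ ChEcliques l q ∪ ChEconn l q

/-- The node set of `G'_{ℓ,q}`: `G_{ℓ,q}` plus `ℓ-1` new internal path nodes. -/
inductive ChV' (l q : ℕ) where
  | old : ChV l q → ChV' l q
  | mid : Fin (l - 1) → ChV' l q
deriving DecidableEq, Fintype

/-- The new `s`–`t` path of `G'_{ℓ,q}` (as a list of nodes; it has `ℓ` edges). -/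
def ChPathList (l q : ℕ) : List (ChV' l q) :=
  ChV'.old ChV.vs :: ((List.finRange (l - 1)).map ChV'.mid ++ [ChV'.old ChV.vt])

/-- The edge set `E'_{ℓ,q}` of `G'_{ℓ,q}`: the (old) edges of `G_{ℓ,q}` together with the
`ℓ` new edges of a path from `s` to `t` through `ℓ-1` new nodes. -/
def ChE' (l q : ℕ) : Finset (Sym2 (ChV' l q)) :=
  (ChE l q).image (Sym2.map ChV'.old) ∪ (uSteps (ChPathList l q)).toFinset

theorem card_filter_toFinset_of_nodup {α : Type*} [DecidableEq α] (p : α → Prop)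
    [DecidablePred p] {L : List α} (hL : L.Nodup) : #(L.toFinset.filter p) = L.countP (p ·) := by
  rw [List.countP_eq_length_filter, ← List.toFinset_card_of_nodup (hL.filter _)]
  congr 1
  ext
  simp

section Walks

variable {V : Type*}

theorem dSteps_cons_cons (a b : V) (l : List V) :
    dSteps (a :: b :: l) = (a, b) :: dSteps (b :: l) := rfl

theorem exists_dStep_leaving (P : V → Prop) :
    ∀ {l : List V} {a b : V}, l.head? = some a → l.getLast? = some b → P a → ¬ P b →
      ∃ s ∈ dSteps l, P s.1 ∧ ¬ P s.2
  | [], _, _, ha, _, _, _ => by simp at ha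
  | [x], a, b, ha, hb, hPa, hPb => by
      simp only [List.head?_cons, List.getLast?_singleton, Option.some.injEq] at ha hb
      subst ha hb
      exact absurd hPa hPb
  | x :: y :: l, a, b, ha, hb, hPa, hPb => by
      simp only [List.head?_cons, Option.some.injEq] at ha
      subst ha
      rw [List.getLast?_cons_cons] at hb
      rw [dSteps_cons_cons]
      by_cases hy : P y
      · obtain ⟨s, hs, hs₁, hs₂⟩ := exists_dStep_leaving P rfl hb hy hPb
        exact ⟨s, List.mem_cons_of_mem _ hs, hs₁, hs₂⟩
      · exact ⟨(x, y), List.mem_cons_self, hPa, hy⟩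

theorem TwoEdgeDisjointPaths.exists_pair_leaving {E : Finset (V × V)} {a b : V}
    (h : TwoEdgeDisjointPaths E a b) {S : Finset V} (ha : a ∈ S) (hb : b ∉ S) :
    ∃ f ∈ E, ∃ g ∈ E, f ≠ g ∧ (f.1 ∈ S ∧ f.2 ∉ S) ∧ (g.1 ∈ S ∧ g.2 ∉ S) := by
  obtain ⟨p, q, -, -, hp₁, hp₂, hq₁, hq₂, hpE, hqE, hdisj⟩ := h
  obtain ⟨f, hf, hfS⟩ := exists_dStep_leaving (· ∈ S) hp₁ hp₂ ha hb
  obtain ⟨g, hg, hgS⟩ := exists_dStep_leaving (· ∈ S) hq₁ hq₂ ha hb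
  exact ⟨f, hpE f hf, g, hqE g hg, fun hfg => hdisj hf (hfg ▸ hg), hfS, hgS⟩

variable [DecidableEq V]

theorem countP_fst_dSteps_add :
    ∀ {l : List V} {a b : V} (w : V), l.head? = some a → l.getLast? = some b →
      (dSteps l).countP (·.1 = w) + (if b = w then 1 else 0)
        = (dSteps l).countP (·.2 = w) + (if a = w then 1 else 0)
  | [], _, _, _, ha, _ => by simp at ha
  | [x], a, b, w, ha, hb => by
      simp only [List.head?_cons, List.getLast?_singleton, Option.some.injEq] at ha hb
      subst ha hb
      rfl
  | x :: y :: l, a, b, w, ha, hb => by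
      simp only [List.head?_cons, Option.some.injEq] at ha
      subst ha
      rw [List.getLast?_cons_cons] at hb
      have ih := countP_fst_dSteps_add w rfl hb
      rw [dSteps_cons_cons, List.countP_cons, List.countP_cons]
      by_cases hx : x = w <;> by_cases hy : y = w <;> simp_all <;> omega

theorem countP_fst_cycSteps (w : V) (c : List V) :
    (cycSteps c).countP (·.1 = w) = (cycSteps c).countP (·.2 = w) := by
  have hfst : (cycSteps c).map Prod.fst = c := List.map_fst_zip (by simp)
  have hsnd : (cycSteps c).map Prod.snd = c.rotate 1 := List.map_snd_zip (by simp)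
  have hcount : ∀ f : V × V → V,
      (cycSteps c).countP (f · = w) = ((cycSteps c).map f).count w := by
    intro f
    rw [List.count, List.countP_map]
    rfl
  rw [hcount Prod.fst, hcount Prod.snd, hfst, hsnd, (List.rotate_perm c 1).count_eq]

end Walks

section Frames

variable {V : Type*} [DecidableEq V]

/-- Adding the reversed edge `(e.2, e.1)` to a frame for `e` gives a balanced edge set. -/
theorem IsFrame.card_filter_fst_add {E F : Finset (V × V)} {e : V × V}
    (hF : IsFrame E e F) (w : V) :
    #(F.filter (·.1 = w)) + (if e.2 = w then 1 else 0)
      = #(F.filter (·.2 = w)) + (if e.1 = w then 1 else 0) := by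
  obtain ⟨-, p, cs, hhead, hlast, -, -, hnodup, rfl⟩ := hF
  have hcycles : ((cs.map cycSteps).flatten).countP (·.1 = w)
      = ((cs.map cycSteps).flatten).countP (·.2 = w) := by
    simp only [List.countP_flatten, List.map_map, Function.comp_def, countP_fst_cycSteps w]
  have hpath := countP_fst_dSteps_add w hhead hlast
  rw [card_filter_toFinset_of_nodup _ hnodup, card_filter_toFinset_of_nodup _ hnodup,
    List.countP_append, List.countP_append, hcycles]
  omega

theorem IsFrame.subset {E F : Finset (V × V)} {e : V × V} (hF : IsFrame E e F) : F ⊆ E :=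
  hF.1.trans (Finset.erase_subset _ _)

theorem IsFrame.notMem {E F : Finset (V × V)} {e : V × V} (hF : IsFrame E e F) : e ∉ F :=
  fun h => (Finset.mem_erase.mp (hF.1 h)).1 rfl

theorem IsFrame.exists_mem_leaving {E F : Finset (V × V)} {e : V × V}
    (hF : IsFrame E e F) {S : Finset V} (h₁ : e.1 ∈ S) (h₂ : e.2 ∉ S) :
    ∃ f ∈ F, f.1 ∈ S ∧ f.2 ∉ S := by
  obtain ⟨-, p, cs, hhead, hlast, -, -, -, rfl⟩ := hF
  obtain ⟨f, hf, hf₁, hf₂⟩ := exists_dStep_leaving (· ∈ S) hhead hlast h₁ h₂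
  exact ⟨f, List.mem_toFinset.mpr (List.mem_append_left _ hf), hf₁, hf₂⟩

end Frames

section Cuts

variable {V : Type*} [DecidableEq V]

theorem outCut_eq_sum_filter (E : Finset (V × V)) (y : V × V → ℝ) (S : Finset V) :
    outCut E (fun e => y e.val) S = ∑ a ∈ E.filter (fun a => a.1 ∈ S ∧ a.2 ∉ S), y a := by
  rw [outCut, Finset.sum_filter, Finset.sum_filter]
  exact Finset.sum_attach E (fun a => if a.1 ∈ S ∧ a.2 ∉ S then y a else 0)

theorem inCut_eq_sum_filter (E : Finset (V × V)) (y : V × V → ℝ) (S : Finset V) :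
    inCut E (fun e => y e.val) S = ∑ a ∈ E.filter (fun a => a.1 ∉ S ∧ a.2 ∈ S), y a := by
  rw [inCut, Finset.sum_filter, Finset.sum_filter]
  exact Finset.sum_attach E (fun a => if a.1 ∉ S ∧ a.2 ∈ S then y a else 0)

theorem inCut_eq_outCut_compl [Fintype V] (E : Finset (V × V)) (x : ↥E → ℝ) (S : Finset V) :
    inCut E x S = outCut E x Sᶜ := by
  simp only [inCut, outCut, Finset.mem_compl, not_not]

variable {E : Finset (V × V)} (hloop : ∀ e ∈ E, e.1 ≠ e.2)
include hloop

theorem outCut_singleton (y : V × V → ℝ) (w : V) :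
    outCut E (fun e => y e.val) {w} = ∑ a ∈ E.filter (·.1 = w), y a := by
  rw [outCut_eq_sum_filter]
  refine Finset.sum_congr (Finset.filter_congr fun a ha => ?_) fun _ _ => rfl
  simp only [Finset.mem_singleton]
  exact ⟨And.left, fun h => ⟨h, fun h' => hloop a ha (h.trans h'.symm)⟩⟩

theorem inCut_singleton (y : V × V → ℝ) (w : V) :
    inCut E (fun e => y e.val) {w} = ∑ a ∈ E.filter (·.2 = w), y a := by
  rw [inCut_eq_sum_filter]
  refine Finset.sum_congr (Finset.filter_congr fun a ha => ?_) fun _ _ => rfl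
  simp only [Finset.mem_singleton]
  exact ⟨And.right, fun h => ⟨fun h' => hloop a ha (h'.trans h.symm), h⟩⟩

end Cuts

section FrameVector

variable {V : Type*} [DecidableEq V]

/-- The vector `y^{(e)}`. -/
noncomputable def frameVector (e : V × V) (F : Finset (V × V)) (a : V × V) : ℝ :=
  if a = e then 0 else if a ∈ F then 1 else 1 / 2

variable {e : V × V} {F : Finset (V × V)}

theorem frameVector_nonneg (a : V × V) : 0 ≤ frameVector e F a := by
  unfold frameVector; split_ifs <;> norm_num

theorem frameVector_le_one (a : V × V) : frameVector e F a ≤ 1 := by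
  unfold frameVector; split_ifs <;> norm_num

theorem half_le_frameVector {a : V × V} (ha : a ≠ e) : 1 / 2 ≤ frameVector e F a := by
  rw [frameVector, if_neg ha]; split_ifs <;> norm_num

theorem frameVector_of_mem {a : V × V} (heF : e ∉ F) (ha : a ∈ F) : frameVector e F a = 1 := by
  rw [frameVector, if_neg (ne_of_mem_of_not_mem ha heF), if_pos ha]

theorem two_mul_sum_frameVector {E : Finset (V × V)} (hFE : F ⊆ E) (heF : e ∉ F) (he : e ∈ E)
    (p : V × V → Prop) [DecidablePred p] :
    2 * ∑ a ∈ E.filter p, frameVector e F a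
      = #(E.filter p) + #(F.filter p) - if p e then 1 else 0 := by
  have hpoint : ∀ a, 2 * frameVector e F a
      = 1 + (if a ∈ F then 1 else 0) - (if a = e then 1 else 0) := by
    intro a
    unfold frameVector
    by_cases hae : a = e
    · simp [hae, heF]
    · by_cases haF : a ∈ F <;> norm_num [hae, haF]
  have hFp : (E.filter p).filter (· ∈ F) = F.filter p := by
    ext a
    simp only [Finset.mem_filter]
    exact ⟨fun ⟨⟨_, hp⟩, ha⟩ => ⟨ha, hp⟩, fun ⟨ha, hp⟩ => ⟨⟨hFE ha, hp⟩, ha⟩⟩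
  simp only [Finset.mul_sum, hpoint, Finset.sum_sub_distrib, Finset.sum_add_distrib,
    Finset.sum_const, nsmul_one, Finset.sum_boole, hFp, Finset.filter_eq']
  by_cases hpe : p e <;> simp [hpe, he]

variable {E : Finset (V × V)}

theorem IsFrame.one_le_sum_frameVector (hF : IsFrame E e F) {a b : V}
    (hab : TwoEdgeDisjointPaths E a b) {S : Finset V} (ha : a ∈ S) (hb : b ∉ S) :
    1 ≤ ∑ f ∈ E.filter (fun f => f.1 ∈ S ∧ f.2 ∉ S), frameVector e F f := by
  by_cases heS : e.1 ∈ S ∧ e.2 ∉ S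
  · obtain ⟨f, hf, hfS⟩ := hF.exists_mem_leaving heS.1 heS.2
    calc 1 = frameVector e F f := (frameVector_of_mem hF.notMem hf).symm
      _ ≤ _ := Finset.single_le_sum (fun f _ => frameVector_nonneg f)
          (Finset.mem_filter.mpr ⟨hF.subset hf, hfS⟩)
  · obtain ⟨f, hf, g, hg, hfg, hfS, hgS⟩ := hab.exists_pair_leaving ha hb
    have hpair : {f, g} ⊆ E.filter (fun f => f.1 ∈ S ∧ f.2 ∉ S) := by
      simp only [Finset.insert_subset_iff, Finset.singleton_subset_iff, Finset.mem_filter]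
      exact ⟨⟨hf, hfS⟩, hg, hgS⟩
    calc (1 : ℝ) = 1 / 2 + 1 / 2 := by norm_num
      _ ≤ frameVector e F f + frameVector e F g :=
          add_le_add (half_le_frameVector fun h => heS (h ▸ hfS))
            (half_le_frameVector fun h => heS (h ▸ hgS))
      _ = ∑ x ∈ {f, g}, frameVector e F x := (Finset.sum_pair hfg).symm
      _ ≤ _ := Finset.sum_le_sum_of_subset_of_nonneg hpair fun x _ _ => frameVector_nonneg x

theorem IsFrame.sum_frameVector_fst_eq_snd (hF : IsFrame E e F) (he : e ∈ E) {w : V}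
    (hdeg : outDeg E w = inDeg E w) :
    ∑ a ∈ E.filter (·.1 = w), frameVector e F a = ∑ a ∈ E.filter (·.2 = w), frameVector e F a := by
  have hout := two_mul_sum_frameVector hF.subset hF.notMem he (·.1 = w)
  have hin := two_mul_sum_frameVector hF.subset hF.notMem he (·.2 = w)
  have hbal : (#(F.filter (·.1 = w)) : ℝ) + (if e.2 = w then 1 else 0)
      = #(F.filter (·.2 = w)) + (if e.1 = w then 1 else 0) := by
    exact_mod_cast hF.card_filter_fst_add w
  have hdegR : (#(E.filter (·.1 = w)) : ℝ) = #(E.filter (·.2 = w)) := by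
    exact_mod_cast hdeg
  linarith

end FrameVector

theorem stmt7 {V : Type*} [Fintype V] [DecidableEq V] (E : Finset (V × V))
    (hloop : ∀ e ∈ E, e.1 ≠ e.2)
    (hdeg : ∀ v : V, outDeg E v = 2 ∧ inDeg E v = 2)
    (hpaths : ∀ u v : V, u ≠ v → TwoEdgeDisjointPaths E u v)
    (e : V × V) (he : e ∈ E) (F : Finset (V × V)) (hF : IsFrame E e F) :
    (fun e' : ↥E => if e'.val = e then (0 : ℝ)
                    else if e'.val ∈ F then 1 else 1 / 2)
      ∈ ATbal Finset.univ E := by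
  change (fun e' : ↥E => frameVector e F e'.val) ∈ ATbal Finset.univ E
  have hcut : ∀ S : Finset V, ∀ a ∈ S, ∀ b ∉ S,
      1 ≤ outCut E (fun e' : ↥E => frameVector e F e'.val) S := fun S a ha b hb => by
    rw [outCut_eq_sum_filter]
    exact hF.one_le_sum_frameVector (hpaths a b (ne_of_mem_of_not_mem ha hb)) ha hb
  refine ⟨fun _ => ⟨frameVector_nonneg _, frameVector_le_one _⟩, ?_, fun w _ => ?_⟩
  · rintro S - ⟨a, ha⟩ hS
    obtain ⟨b, hb⟩ : ∃ b, b ∉ S := by simpa [Finset.eq_univ_iff_forall] using hS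
    rw [inCut_eq_outCut_compl]
    exact ⟨hcut S a ha b hb, hcut Sᶜ b (Finset.mem_compl.mpr hb) a (by simpa using ha)⟩
  · rw [outCut_singleton hloop, inCut_singleton hloop]
    exact hF.sum_frameVector_fst_eq_snd he ((hdeg w).1.trans (hdeg w).2.symm)

end TSPGap
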